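/- Let M, a, s be positive integers with M > 1 such that ∑_{i=0}^{M-1} (a+i)^2 = s^2, and suppose M = 24·m₁ for a positive integer m₁. Then for every prime p > 3 with p ≡ 3 (mod 4), there do not exist integers i ≥ 0 and q ≥ 1 with p ∤ q such that 24·m₁ + 1 = p^(2i+1)·q; equivalently, the exact power of p dividing M + 1 is even. -/

import Mathlib

/-!
Put `X = 2a + M - 1`. From `12 ∑ (a+i)² = 3M X² + M(M-1)(M+1)` and `M = 24m₁` one gets
`(2s)² - 24m₁ X² = 8m₁(M-1)(M+1)`. Modulo a prime `p ∣ M + 1` we have `24m₁ ≡ -1`, so the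
left side is a sum of two squares mod `p`; for `p ≡ 3 (mod 4)` such a form has even `p`-adic
valuation, while `p` divides the right side to the same odd power as it divides `M + 1`.
-/

theorem sum_range_add_sq_mul_twelve {R : Type*} [CommRing R] (x : R) (n : ℕ) :
    12 * ∑ i ∈ Finset.range n, (x + i) ^ 2
      = 3 * n * (2 * x + n - 1) ^ 2 + n * (n - 1) * (n + 1) := by
  induction n with
  | zero => simp
  | succ n ih =>
    rw [Finset.sum_range_succ, mul_add, ih]
    push_cast
    ring

theorem ZMod.eq_zero_of_sq_add_sq_eq_zero {p : ℕ} [Fact p.Prime] (hp4 : p % 4 = 3)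
    {x y : ZMod p} (h : x ^ 2 + y ^ 2 = 0) : y = 0 := by
  by_contra hy
  exact ZMod.mod_four_ne_three_of_sq_eq_neg_sq' hy (eq_neg_of_add_eq_zero_left h) hp4

section QuadraticForm

variable {p : ℕ} [Fact p.Prime] {c : ℤ}

theorem Int.dvd_of_dvd_sq_sub_mul_sq (hp4 : p % 4 = 3) (hc : (p : ℤ) ∣ c + 1) {u x : ℤ}
    (h : (p : ℤ) ∣ u ^ 2 - c * x ^ 2) : (p : ℤ) ∣ u ∧ (p : ℤ) ∣ x := by
  simp only [← ZMod.intCast_zmod_eq_zero_iff_dvd, Int.cast_add, Int.cast_sub, Int.cast_mul,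
    Int.cast_pow, Int.cast_one] at hc h ⊢
  have hsum : (x : ZMod p) ^ 2 + (u : ZMod p) ^ 2 = 0 := by
    linear_combination h + (x : ZMod p) ^ 2 * hc
  exact ⟨ZMod.eq_zero_of_sq_add_sq_eq_zero hp4 hsum,
    ZMod.eq_zero_of_sq_add_sq_eq_zero (x := (u : ZMod p)) hp4 (by linear_combination hsum)⟩

theorem Int.exists_sq_sub_mul_sq_eq_sq_mul (hp4 : p % 4 = 3) (hc : (p : ℤ) ∣ c + 1) {u x : ℤ}
    (h : (p : ℤ) ∣ u ^ 2 - c * x ^ 2) :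
    ∃ u' x' : ℤ, u ^ 2 - c * x ^ 2 = (p : ℤ) ^ 2 * (u' ^ 2 - c * x' ^ 2) := by
  obtain ⟨⟨u', rfl⟩, ⟨x', rfl⟩⟩ := Int.dvd_of_dvd_sq_sub_mul_sq hp4 hc h
  exact ⟨u', x', by ring⟩

theorem Int.pow_two_mul_add_two_dvd_sq_sub_mul_sq (hp4 : p % 4 = 3) (hc : (p : ℤ) ∣ c + 1)
    (i : ℕ) {u x : ℤ} (h : (p : ℤ) ^ (2 * i + 1) ∣ u ^ 2 - c * x ^ 2) :
    (p : ℤ) ^ (2 * i + 2) ∣ u ^ 2 - c * x ^ 2 := by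
  induction i generalizing u x with
  | zero =>
    obtain ⟨u', x', hux⟩ := Int.exists_sq_sub_mul_sq_eq_sq_mul hp4 hc (by simpa using h)
    exact hux ▸ dvd_mul_right _ _
  | succ i ih =>
    obtain ⟨u', x', hux⟩ :=
      Int.exists_sq_sub_mul_sq_eq_sq_mul hp4 hc (dvd_trans (dvd_pow_self _ (by omega)) h)
    have hp2 : (p : ℤ) ^ 2 ≠ 0 := pow_ne_zero 2 (mod_cast (Fact.out : p.Prime).ne_zero)
    rw [hux, show 2 * (i + 1) + 1 = 2 + (2 * i + 1) by ring, pow_add,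
      mul_dvd_mul_iff_left hp2] at h
    rw [hux, show 2 * (i + 1) + 2 = 2 + (2 * i + 2) by ring, pow_add, mul_dvd_mul_iff_left hp2]
    exact ih h

end QuadraticForm

theorem stmt_general (M a s m₁ : ℕ)
    (hsum : ∑ i ∈ Finset.range M, (a + i) ^ 2 = s ^ 2)
    (hMeq : M = 24 * m₁) :
    ∀ p : ℕ, p.Prime → 3 < p → p % 4 = 3 →
      ¬ ∃ i q : ℕ, 1 ≤ q ∧ ¬ p ∣ q ∧ 24 * m₁ + 1 = p ^ (2 * i + 1) * q := by
  rintro p hp - hp4 ⟨i, q, -, hpq, hpow⟩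
  have : Fact p.Prime := ⟨hp⟩
  subst hMeq
  have hpow' : (24 * m₁ + 1 : ℤ) = p ^ (2 * i + 1) * q := mod_cast hpow
  have hform : (2 * s : ℤ) ^ 2 - 24 * m₁ * (2 * a + 24 * m₁ - 1) ^ 2
      = p ^ (2 * i + 1) * (8 * m₁ * (24 * m₁ - 1) * q) := by
    have h12 := sum_range_add_sq_mul_twelve (a : ℤ) (24 * m₁)
    rw [show ∑ i ∈ Finset.range (24 * m₁), ((a : ℤ) + i) ^ 2 = s ^ 2 by exact_mod_cast hsum]
      at h12
    refine mul_left_cancel₀ (three_ne_zero (α := ℤ)) ?_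
    push_cast at h12
    linear_combination h12 + 24 * (m₁ : ℤ) * (24 * m₁ - 1) * hpow'
  have hc : (p : ℤ) ∣ 24 * m₁ + 1 := hpow' ▸ dvd_mul_of_dvd_left (dvd_pow_self _ (by omega)) _
  have hr : ¬ (p : ℤ) ∣ 8 * m₁ * (24 * m₁ - 1) * q := by
    have hq : (q : ZMod p) ≠ 0 := by rwa [Ne, ZMod.natCast_eq_zero_iff]
    have h2 : (2 : ZMod p) ≠ 0 := by
      intro h2
      have := (Nat.prime_dvd_prime_iff_eq hp Nat.prime_two).mp
        ((ZMod.natCast_eq_zero_iff 2 p).mp (mod_cast h2))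
      omega
    rw [← ZMod.intCast_zmod_eq_zero_iff_dvd] at hc ⊢
    push_cast at hc ⊢
    intro h
    -- `3 · 8m₁(24m₁ - 1) = (24m₁ + 1)(24m₁ - 2) + 2`
    exact h2 (by linear_combination 3 * (mul_eq_zero.mp h).resolve_right hq - (24 * m₁ - 2) * hc)
  have h := Int.pow_two_mul_add_two_dvd_sq_sub_mul_sq hp4 hc i (hform ▸ dvd_mul_right _ _)
  rw [hform, pow_succ, mul_dvd_mul_iff_left (pow_ne_zero _ (mod_cast hp.ne_zero))] at h
  exact hr h

theorem stmt (M a s m₁ : ℕ) (hM : 1 < M) (ha : 1 ≤ a) (hs : 1 ≤ s)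
    (hsum : ∑ i ∈ Finset.range M, (a + i) ^ 2 = s ^ 2)
    (hm : 1 ≤ m₁) (hMeq : M = 24 * m₁) :
    ∀ p : ℕ, p.Prime → 3 < p → p % 4 = 3 →
      ¬ ∃ i q : ℕ, 1 ≤ q ∧ ¬ p ∣ q ∧ 24 * m₁ + 1 = p ^ (2 * i + 1) * q :=
  stmt_general M a s m₁ hsum hMeq
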